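/- Let W be a linearly ordered measurable space, μ = μ̄_1 ⊗ ⋯ ⊗ μ̄_n a database distribution on W^n, and F : W^n → ℝ a measurable query that is symmetric and monotone. Assume μ is F-samplable. Let τ, τ̂ be sampling templates of size n with τ ≈_j τ̂. Then for every ε ≥ 0 and every v ∈ W: Δ_ε( (F ∘ SAMP_τ)_* μ_{j,v} , (F ∘ SAMP_τ̂)_* μ ) ≤ sup_{w ∈ W} Δ_ε( (F ∘ SAMP_τ)_* μ_{j,v} , (F ∘ SAMP_τ)_* μ_{j,w} ). -/

import Mathlib

open MeasureTheory Real
open scoped ENNReal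

noncomputable section

/-- Hockey-stick divergence / privacy curve `Δ_ε(μ,ν)`. -/
def hsDiv {A : Type*} [MeasurableSpace A] (ε : ℝ) (μ ν : Measure A) : ℝ :=
  ⨆ S : {S : Set A // MeasurableSet S}, ((μ S.1).toReal - Real.exp ε * (ν S.1).toReal)

/-- Subsampling map induced by a template. -/
def SAMP {W : Type*} {n m : ℕ} (τ : Fin m → Fin n) (x : Fin n → W) : Fin m → W :=
  fun i => x (τ i)

/-- Product measure with `j`-th factor replaced by the Dirac measure at `v`. -/
def fixEntry {W : Type*} [MeasurableSpace W] {n : ℕ} (μbar : Fin n → Measure W)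
    (j : Fin n) (v : W) : Measure (Fin n → W) :=
  Measure.pi (Function.update μbar j (Measure.dirac v))

open Classical in
/-- Sampling privacy curve `SPC^j` : conditional expectation over templates containing `j`. -/
def SPCj {W A : Type*} [MeasurableSpace W] [MeasurableSpace A] {n m : ℕ}
    (F : (Fin m → W) → A) (μbar : Fin n → Measure W)
    (𝒯 : (Fin m → Fin n) → ℝ≥0∞) (j : Fin n) (ε : ℝ) : ℝ :=
  (∑ τ : Fin m → Fin n, if j ∈ Set.range τ then (𝒯 τ).toReal *
      (⨆ v : W, ⨆ w : W, hsDiv ε (Measure.map (fun x => F (SAMP τ x)) (fixEntry μbar j v))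
        (Measure.map (fun x => F (SAMP τ x)) (fixEntry μbar j w))) else 0) /
  (∑ τ : Fin m → Fin n, if j ∈ Set.range τ then (𝒯 τ).toReal else 0)

open Classical in
/-- Uniform distribution on injective templates (sampling without replacement). -/
def uniformInj (n m : ℕ) : (Fin m → Fin n) → ℝ≥0∞ :=
  fun τ => if Function.Injective τ then
    ((Finset.univ.filter (fun σ : Fin m → Fin n => Function.Injective σ)).card : ℝ≥0∞)⁻¹ else 0

open Classical in
/-- Conditioning of a distribution on templates to an event. -/
def condDist {n m : ℕ} (𝒯 : (Fin m → Fin n) → ℝ≥0∞) (E : Set (Fin m → Fin n)) :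
    (Fin m → Fin n) → ℝ≥0∞ :=
  fun τ => if τ ∈ E then 𝒯 τ / (∑ σ : Fin m → Fin n, if σ ∈ E then 𝒯 σ else 0) else 0

/-- The increasing enumeration of a finite set of indices, as a sampling template. -/
def poissonTemplate {n : ℕ} (s : Finset (Fin n)) : Fin s.card → Fin n :=
  fun i => (s.orderIsoOfFin rfl i : Fin n)

/-- Statistical privacy curve of a query. -/
def Phi {W A : Type*} [MeasurableSpace W] [MeasurableSpace A] {k : ℕ}
    (μbar : Fin k → Measure W) (F : (Fin k → W) → A) (ε : ℝ) : ℝ :=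
  ⨆ j : Fin k, ⨆ v : W, ⨆ w : W,
    hsDiv ε (Measure.map F (fixEntry μbar j v)) (Measure.map F (fixEntry μbar j w))

/-- trade-off function -/
def tradeOff {A : Type*} [MeasurableSpace A] (P Q : Measure A) (α : ℝ) : ℝ :=
  sInf { y | ∃ S : Set A, MeasurableSet S ∧ (P Sᶜ).toReal ≤ α ∧ y = (Q S).toReal }

/-- total variation distance -/
def tvDist {A : Type*} [MeasurableSpace A] (μ ν : Measure A) : ℝ :=
  ⨆ S : {S : Set A // MeasurableSet S}, |(μ S.1).toReal - (ν S.1).toReal|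

/-- support of a measure -/
def msupport {X : Type*} [TopologicalSpace X] [MeasurableSpace X] (μ : Measure X) : Set X :=
  {x | ∀ U : Set X, IsOpen U → x ∈ U → 0 < μ U}

/-- τ ≈_j σ -/
def ApproxAt {n m : ℕ} (j : Fin n) (τ σ : Fin m → Fin n) : Prop :=
  ∀ i, (τ i ≠ j → σ i = τ i) ∧ (τ i = j → σ i ≠ j)

/-- F-samplable -/
def FSamplable {W : Type*} [MeasurableSpace W] {n m : ℕ}
    (μbar : Fin n → Measure W) (F : (Fin m → W) → ℝ) : Prop :=
  ∀ (τ σ : Fin m → Fin n) (j : Fin n) (v w : W) (ε : ℝ), 0 ≤ ε →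
    ∃ S : Set ℝ, ((∃ a, S = Set.Iic a) ∨ (∃ a, S = Set.Ici a) ∨ S = ∅) ∧
      ((Measure.map (fun x => F (SAMP τ x)) (fixEntry μbar j v)) S).toReal -
        Real.exp ε * ((Measure.map (fun x => F (SAMP σ x)) (fixEntry μbar j w)) S).toReal =
      hsDiv ε (Measure.map (fun x => F (SAMP τ x)) (fixEntry μbar j v))
        (Measure.map (fun x => F (SAMP σ x)) (fixEntry μbar j w))

/-! Since `σ` never samples index `j`, the second distribution is unchanged by fixing entry `j`,
so by samplability the left side is attained on a half-line or empty set `S`. Its preimage under the monotone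
query is an upper or lower set `T`, and it suffices to find, for every `δ > 0`, a value `w` with
`P(SAMP τ x[j ↦ w] ∈ T) ≤ P(SAMP σ x ∈ T) + δ`. Pointwise, `w = min_k x_k` (resp. `max`) works, as
`τ ≈_j σ` then gives `SAMP τ x[j ↦ w] ≤ SAMP σ x`. To replace this random value by a constant,
resample one coordinate at a time: by independence of the `k`-th coordinate, a near-minimiser `w`
of `u ↦ P((x[k ↦ u], u) ∈ V)` does as well as the diagonal `u = x_k`. -/

section ProductMeasure

variable {ι : Type*} [Fintype ι] [DecidableEq ι] {X : ι → Type*} [∀ i, MeasurableSpace (X i)]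
  (μ : ∀ i, Measure (X i)) [∀ i, IsProbabilityMeasure (μ i)]

theorem lintegral_pi_eq_lintegral_lintegral_update (k : ι) {f : (∀ i, X i) → ℝ≥0∞}
    (hf : Measurable f) :
    ∫⁻ x, f x ∂Measure.pi μ = ∫⁻ u, ∫⁻ x, f (Function.update x k u) ∂Measure.pi μ ∂μ k := by
  obtain ⟨x⟩ : Nonempty (∀ i, X i) := ⟨fun i => (nonempty_of_isProbabilityMeasure (μ i)).some⟩
  have hg : Measurable fun x => ∫⁻ u, f (Function.update x k u) ∂μ k :=
    (hf.comp measurable_update').lintegral_prod_right'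
  -- Peel the `k`-th integral off both sides; on the right it integrates a function of `x` that
  -- no longer depends on `x k`.
  have hpeel :
      ∫⁻ x, f x ∂Measure.pi μ = ∫⁻ x, ∫⁻ u, f (Function.update x k u) ∂μ k ∂Measure.pi μ := by
    have hf' := congrFun (lmarginal_erase' (μ := μ) f hf (Finset.mem_univ k)) x
    have hg' := congrFun (lmarginal_erase' (μ := μ) _ hg (Finset.mem_univ k)) x
    simp only [lmarginal_univ, Function.update_idem, lintegral_const, measure_univ, mul_one]
      at hf' hg'
    rw [hf', hg']
  rw [hpeel]
  exact lintegral_lintegral_swap (hf.comp measurable_update').aemeasurable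

theorem measure_pi_eq_lintegral_update_preimage (k : ι) {A : Set (∀ i, X i)}
    (hA : MeasurableSet A) :
    Measure.pi μ A = ∫⁻ u, Measure.pi μ ((Function.update · k u) ⁻¹' A) ∂μ k := by
  simp_rw [← lintegral_indicator_one hA, ← lintegral_indicator_one (measurable_update_left hA)]
  exact lintegral_pi_eq_lintegral_lintegral_update μ k (measurable_const.indicator hA)

theorem pi_update_dirac_eq_map_update (k : ι) (w : X k) :
    Measure.pi (Function.update μ k (Measure.dirac w)) =
      (Measure.pi μ).map (Function.update · k w) := by
  set f : ∀ i, X i → X i := Function.update (fun _ => id) k (fun _ => w)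
  have hf : (Function.update · k w) = fun (x : ∀ i, X i) i => f i (x i) := by
    ext x i
    rcases eq_or_ne i k with rfl | hik <;> simp [f, *]
  have hfi : ∀ i, (μ i).map (f i) = Function.update μ k (Measure.dirac w) i := by
    intro i
    rcases eq_or_ne i k with rfl | hik
    · simp [f, Measure.map_const]
    · simp [f, hik]
  rw [hf, Measure.pi_map_pi fun i => ?_]
  · simp_rw [hfi]
  · rcases eq_or_ne i k with rfl | hik
    · simp [f, aemeasurable_const]
    · simp [f, hik, aemeasurable_id]

end ProductMeasure

theorem IsUpperSet.prodMk_mem {α β : Type*} [Preorder α] [Preorder β] {V : Set (α × β)}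
    (hV : IsUpperSet V) {x x' : α} {w w' : β} (hx : x ≤ x') (hw : w ≤ w') (h : (x, w) ∈ V) :
    (x', w') ∈ V :=
  hV ⟨hx, hw⟩ h

section Slices

variable {ι W : Type*} [Fintype ι] [DecidableEq ι] [MeasurableSpace W] [LinearOrder W]
  (μ : ι → Measure W) [∀ i, IsProbabilityMeasure (μ i)] {V : Set ((ι → W) × W)}

theorem exists_measure_slice_le_measure_diag_add (hV : IsUpperSet V) (hVm : MeasurableSet V)
    (k : ι) {δ : ℝ≥0∞} (hδ : 0 < δ) :
    ∃ w, Measure.pi μ {x | (x, w) ∈ V} ≤ Measure.pi μ {x | (x, x k) ∈ V} + δ := by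
  set H : W → ℝ≥0∞ := fun u => Measure.pi μ {x | (Function.update x k u, u) ∈ V}
  have : Nonempty W := nonempty_of_isProbabilityMeasure (μ k)
  obtain ⟨w, hw⟩ : ∃ w, ∀ u, H w ≤ H u + δ := by
    have hfin : ⨅ u, H u ≠ ⊤ :=
      ne_top_of_le_ne_top ENNReal.one_ne_top ((iInf_le H (Classical.arbitrary W)).trans prob_le_one)
    obtain ⟨w, hw⟩ := iInf_lt_iff.mp (ENNReal.lt_add_right hfin hδ.ne')
    exact ⟨w, fun u => hw.le.trans (by gcongr; exact iInf_le H u)⟩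
  -- `(x[k ↦ u], w) ≤ (x[k ↦ max u w], max u w)`, and `H (max u w) ≤ H u + δ` in both cases.
  have hbound : ∀ u, Measure.pi μ ((Function.update · k u) ⁻¹' {x | (x, w) ∈ V}) ≤ H u + δ := by
    intro u
    calc _ ≤ H (max u w) := measure_mono fun x =>
          hV.prodMk_mem (Function.update_mono le_sup_left) le_sup_right
      _ ≤ H u + δ := by rcases max_choice u w with h | h <;> rw [h] <;> simp [hw]
  refine ⟨w, ?_⟩
  calc Measure.pi μ {x | (x, w) ∈ V}
      = ∫⁻ u, Measure.pi μ ((Function.update · k u) ⁻¹' {x | (x, w) ∈ V}) ∂μ k :=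
        measure_pi_eq_lintegral_update_preimage μ k (measurable_prodMk_right hVm)
    _ ≤ ∫⁻ u, (H u + δ) ∂μ k := lintegral_mono hbound
    _ = ∫⁻ u, H u ∂μ k + δ := by
        rw [lintegral_add_right _ measurable_const, lintegral_const, measure_univ, mul_one]
    _ = Measure.pi μ {x | (x, x k) ∈ V} + δ := by
        rw [measure_pi_eq_lintegral_update_preimage μ k (A := {x | (x, x k) ∈ V})
          ((measurable_id.prodMk (measurable_pi_apply k)) hVm)]
        simp [H]

-- Carrying the extra constraint at `w₀` makes the empty case trivial and lets the induction step
-- absorb the slice produced by the single-coordinate lemma.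
theorem exists_measure_slice_le_measure_slice_inter_diag_add (hV : IsUpperSet V)
    (hVm : MeasurableSet V) (K : Finset ι) (w₀ : W) {δ : ℝ≥0∞} (hδ : 0 < δ) :
    ∃ w, Measure.pi μ {x | (x, w) ∈ V} ≤
      Measure.pi μ {x | (x, w₀) ∈ V ∧ ∀ k ∈ K, (x, x k) ∈ V} + δ := by
  induction K using Finset.induction_on generalizing w₀ δ with
  | empty => exact ⟨w₀, by simp⟩
  | insert a s ha ih =>
    set V₂ := {p : (ι → W) × W | p ∈ V ∧ (p.1, w₀) ∈ V ∧ ∀ k ∈ s, (p.1, p.1 k) ∈ V}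
    have hV₂ : IsUpperSet V₂ := fun p q hpq hp =>
      ⟨hV hpq hp.1, hV.prodMk_mem hpq.1 le_rfl hp.2.1,
        fun k hk => hV.prodMk_mem hpq.1 (hpq.1 k) (hp.2.2 k hk)⟩
    have hV₂m : MeasurableSet V₂ := by
      refine hVm.inter ((measurable_fst.prodMk measurable_const hVm).inter ?_)
      exact measurableSet_setOfPred.2 <| Measurable.forall fun k => Measurable.forall fun _ =>
        measurableSet_setOfPred.1
          ((measurable_fst.prodMk ((measurable_pi_apply k).comp measurable_fst)) hVm)
    have hδ2 : 0 < δ / 2 := ENNReal.half_pos hδ.ne'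
    obtain ⟨w₂, hw₂⟩ := exists_measure_slice_le_measure_diag_add μ hV₂ hV₂m a hδ2
    obtain ⟨w, hw⟩ := ih (min w₂ w₀) hδ2
    refine ⟨w, hw.trans ?_⟩
    calc _ ≤ Measure.pi μ {x | (x, w₂) ∈ V₂} + δ / 2 := by
          gcongr
          exact fun hx => ⟨hV.prodMk_mem le_rfl (min_le_left _ _) hx.1,
            hV.prodMk_mem le_rfl (min_le_right _ _) hx.1, hx.2⟩
      _ ≤ Measure.pi μ {x | (x, x a) ∈ V₂} + δ / 2 + δ / 2 := by gcongr
      _ = _ := by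
          rw [add_assoc, ENNReal.add_halves]
          congr 2
          ext x
          simp only [V₂, Set.mem_ofPred_eq, Finset.mem_insert, forall_eq_or_imp]
          tauto

theorem exists_measure_slice_le_measure_forall_diag_add (hV : IsUpperSet V)
    (hVm : MeasurableSet V) [Nonempty W] {δ : ℝ≥0∞} (hδ : 0 < δ) :
    ∃ w, Measure.pi μ {x | (x, w) ∈ V} ≤ Measure.pi μ {x | ∀ k, (x, x k) ∈ V} + δ := by
  obtain ⟨w, hw⟩ := exists_measure_slice_le_measure_slice_inter_diag_add μ hV hVm
    Finset.univ (Classical.arbitrary W) hδ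
  exact ⟨w, hw.trans (by gcongr; exact fun hx k => hx.2 k (Finset.mem_univ k))⟩

end Slices

section Sampling

variable {W : Type*} {n m : ℕ} {j : Fin n} {τ σ : Fin m → Fin n}

theorem monotone_SAMP [Preorder W] (τ : Fin m → Fin n) :
    Monotone (SAMP τ : (Fin n → W) → Fin m → W) :=
  fun _ _ hxy i => hxy (τ i)

theorem ApproxAt.ne (h : ApproxAt j τ σ) (i : Fin m) : σ i ≠ j := by
  by_cases hi : τ i = j
  · exact (h i).2 hi
  · rwa [(h i).1 hi]

theorem SAMP_update_of_forall_ne (hσ : ∀ i, σ i ≠ j) (x : Fin n → W) (v : W) :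
    SAMP σ (Function.update x j v) = SAMP σ x :=
  funext fun i => by simp [SAMP, hσ i]

theorem ApproxAt.SAMP_update_le [Preorder W] (h : ApproxAt j τ σ) {x : Fin n → W} {c : W}
    (hc : ∀ k, c ≤ x k) : SAMP τ (Function.update x j c) ≤ SAMP σ x := by
  intro i
  by_cases hi : τ i = j
  · simp [SAMP, hi, hc]
  · simp [SAMP, hi, (h i).1 hi]

variable [MeasurableSpace W]

theorem measurable_SAMP (τ : Fin m → Fin n) : Measurable (SAMP τ : (Fin n → W) → Fin m → W) :=
  measurable_pi_lambda _ fun i => measurable_pi_apply (τ i)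

variable [LinearOrder W] (μbar : Fin n → Measure W) [hμ : ∀ i, IsProbabilityMeasure (μbar i)]
  {T : Set (Fin m → W)} {δ : ℝ≥0∞}

theorem ApproxAt.exists_measure_preimage_le_of_isUpperSet (h : ApproxAt j τ σ)
    (hT : IsUpperSet T) (hTm : MeasurableSet T) (hδ : 0 < δ) :
    ∃ w, Measure.pi μbar ((fun x => SAMP τ (Function.update x j w)) ⁻¹' T) ≤
      Measure.pi μbar (SAMP σ ⁻¹' T) + δ := by
  have : Nonempty W := nonempty_of_isProbabilityMeasure (μbar j)
  have hV : IsUpperSet ((fun p : (Fin n → W) × W => SAMP τ (Function.update p.1 j p.2)) ⁻¹' T) :=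
    hT.preimage fun p q hpq =>
      monotone_SAMP τ (update_le_update_iff.2 ⟨hpq.2, fun i _ => hpq.1 i⟩)
  obtain ⟨w, hw⟩ := exists_measure_slice_le_measure_forall_diag_add μbar hV
    ((measurable_SAMP τ).comp measurable_update' hTm) hδ
  refine ⟨w, hw.trans ?_⟩
  gcongr
  intro x hx
  have : Nonempty (Fin n) := ⟨j⟩
  obtain ⟨k, hk⟩ := Finite.exists_min x
  exact hT (h.SAMP_update_le hk) (hx k)

theorem ApproxAt.exists_measure_preimage_le_of_isLowerSet (h : ApproxAt j τ σ)
    (hT : IsLowerSet T) (hTm : MeasurableSet T) (hδ : 0 < δ) :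
    ∃ w, Measure.pi μbar ((fun x => SAMP τ (Function.update x j w)) ⁻¹' T) ≤
      Measure.pi μbar (SAMP σ ⁻¹' T) + δ :=
  h.exists_measure_preimage_le_of_isUpperSet (W := Wᵒᵈ) μbar (hμ := hμ)
    (fun _ _ hab ha => hT hab ha) hTm hδ

end Sampling

section Query

variable {W β : Type*} [MeasurableSpace W] [MeasurableSpace β] {n m : ℕ} {j : Fin n}
  {τ σ : Fin m → Fin n} (μbar : Fin n → Measure W) [∀ i, IsProbabilityMeasure (μbar i)]
  {F : (Fin m → W) → β}

instance isProbabilityMeasure_fixEntry (j : Fin n) (v : W) :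
    IsProbabilityMeasure (fixEntry μbar j v) := by
  rw [fixEntry, pi_update_dirac_eq_map_update]
  exact Measure.isProbabilityMeasure_map measurable_update_left.aemeasurable

theorem map_fixEntry_eq_of_forall_ne (hFm : Measurable F) (hσ : ∀ i, σ i ≠ j) (v : W) :
    (fixEntry μbar j v).map (fun x => F (SAMP σ x)) =
      (Measure.pi μbar).map (fun x => F (SAMP σ x)) := by
  have hmeas : Measurable fun x : Fin n → W => F (SAMP σ x) := hFm.comp (measurable_SAMP σ)
  rw [fixEntry, pi_update_dirac_eq_map_update, Measure.map_map hmeas measurable_update_left]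
  congr 1
  funext x
  exact congrArg F (SAMP_update_of_forall_ne hσ x v)

theorem ApproxAt.exists_map_fixEntry_le [LinearOrder W] [Preorder β] (h : ApproxAt j τ σ)
    (hF : Monotone F) (hFm : Measurable F) {S : Set β} (hS : IsUpperSet S ∨ IsLowerSet S)
    (hSm : MeasurableSet S) {δ : ℝ≥0∞} (hδ : 0 < δ) :
    ∃ w, (fixEntry μbar j w).map (fun x => F (SAMP τ x)) S ≤
      (Measure.pi μbar).map (fun x => F (SAMP σ x)) S + δ := by
  have hmeas (τ' : Fin m → Fin n) : Measurable fun x : Fin n → W => F (SAMP τ' x) :=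
    hFm.comp (measurable_SAMP τ')
  have hfix (w : W) : (fixEntry μbar j w).map (fun x => F (SAMP τ x)) S =
      Measure.pi μbar ((fun x => SAMP τ (Function.update x j w)) ⁻¹' (F ⁻¹' S)) := by
    rw [Measure.map_apply (hmeas τ) hSm, fixEntry, pi_update_dirac_eq_map_update,
      Measure.map_apply measurable_update_left (hmeas τ hSm)]
    rfl
  simp_rw [hfix, Measure.map_apply (hmeas σ) hSm]
  rcases hS with hS | hS
  · exact h.exists_measure_preimage_le_of_isUpperSet μbar (hS.preimage hF) (hFm hSm) hδ
  · exact h.exists_measure_preimage_le_of_isLowerSet μbar (hS.preimage hF) (hFm hSm) hδ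

end Query

section HockeyStick

variable {A ι : Type*} [MeasurableSpace A] {ε : ℝ} {P Q : Measure A} [IsFiniteMeasure P]

theorem sub_le_toReal_measure_univ (S : Set A) :
    (P S).toReal - exp ε * (Q S).toReal ≤ (P Set.univ).toReal := by
  have : (P S).toReal ≤ (P Set.univ).toReal :=
    ENNReal.toReal_mono (measure_ne_top _ _) (measure_mono (Set.subset_univ _))
  have : 0 ≤ exp ε * (Q S).toReal := by positivity
  linarith

theorem sub_le_hsDiv {S : Set A} (hS : MeasurableSet S) :
    (P S).toReal - exp ε * (Q S).toReal ≤ hsDiv ε P Q := by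
  refine le_ciSup (f := fun S : {S : Set A // MeasurableSet S} =>
    (P S.1).toReal - exp ε * (Q S.1).toReal) ⟨(P Set.univ).toReal, ?_⟩ ⟨S, hS⟩
  rintro _ ⟨S', rfl⟩
  exact sub_le_toReal_measure_univ S'.1

theorem hsDiv_le_toReal_measure_univ : hsDiv ε P Q ≤ (P Set.univ).toReal :=
  have : Nonempty {S : Set A // MeasurableSet S} := ⟨⟨∅, .empty⟩⟩
  ciSup_le fun S => sub_le_toReal_measure_univ S.1

theorem sub_le_iSup_hsDiv [IsFiniteMeasure Q] {R : ι → Measure A} {S : Set A}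
    (hS : MeasurableSet S) (h : ∀ δ : ℝ≥0∞, 0 < δ → ∃ i, R i S ≤ Q S + δ) :
    (P S).toReal - exp ε * (Q S).toReal ≤ ⨆ i, hsDiv ε P (R i) := by
  have hbdd : BddAbove (Set.range fun i => hsDiv ε P (R i)) :=
    ⟨(P Set.univ).toReal, by rintro _ ⟨i, rfl⟩; exact hsDiv_le_toReal_measure_univ⟩
  refine le_of_forall_pos_le_add fun δ hδ => ?_
  have hexp := exp_pos ε
  obtain ⟨i, hi⟩ := h (ENNReal.ofReal (δ / exp ε)) (by simp [hδ, hexp])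
  have hRi : (R i S).toReal ≤ (Q S).toReal + δ / exp ε := by
    have := ENNReal.toReal_mono (by finiteness) hi
    rwa [ENNReal.toReal_add (measure_ne_top _ _) ENNReal.ofReal_ne_top,
      ENNReal.toReal_ofReal (by positivity)] at this
  calc (P S).toReal - exp ε * (Q S).toReal ≤ (P S).toReal - exp ε * (R i S).toReal + δ := by
        have := mul_le_mul_of_nonneg_left hRi hexp.le
        rw [mul_add, mul_div_cancel₀ _ hexp.ne'] at this
        linarith
    _ ≤ hsDiv ε P (R i) + δ := by gcongr; exact sub_le_hsDiv hS
    _ ≤ (⨆ i, hsDiv ε P (R i)) + δ := by gcongr; exact le_ciSup hbdd i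

end HockeyStick

theorem hsDiv_approx_template_le_sup_general
    {W : Type*} [MeasurableSpace W] [LinearOrder W] {n : ℕ}
    (μbar : Fin n → Measure W) (hμ : ∀ i, IsProbabilityMeasure (μbar i))
    (F : (Fin n → W) → ℝ) (hFmeas : Measurable F)
    (hFmono : Monotone F)
    (hFsamp : FSamplable μbar F)
    (j : Fin n) (τ σ : Fin n → Fin n) (hτσ : ApproxAt j τ σ)
    (ε : ℝ) (hε : 0 ≤ ε) (v : W) :
    hsDiv ε (Measure.map (fun x => F (SAMP τ x)) (fixEntry μbar j v))
        (Measure.map (fun x => F (SAMP σ x)) (Measure.pi μbar))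
      ≤ ⨆ w : W, hsDiv ε (Measure.map (fun x => F (SAMP τ x)) (fixEntry μbar j v))
          (Measure.map (fun x => F (SAMP τ x)) (fixEntry μbar j w)) := by
  obtain ⟨S, hS, hSmax⟩ := hFsamp τ σ j v v ε hε
  rw [map_fixEntry_eq_of_forall_ne μbar hFmeas hτσ.ne] at hSmax
  obtain ⟨hSm, hSord⟩ : MeasurableSet S ∧ (IsUpperSet S ∨ IsLowerSet S) := by
    rcases hS with ⟨a, rfl⟩ | ⟨a, rfl⟩ | rfl
    · exact ⟨measurableSet_Iic, .inr (isLowerSet_Iic a)⟩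
    · exact ⟨measurableSet_Ici, .inl (isUpperSet_Ici a)⟩
    · exact ⟨.empty, .inl isUpperSet_empty⟩
  rw [← hSmax]
  exact sub_le_iSup_hsDiv hSm fun δ hδ =>
    hτσ.exists_map_fixEntry_le μbar hFmono hFmeas hSord hSm hδ

/-- for a symmetric monotone query with a samplable database distribution,
comparing a fixed-entry distribution sampled via τ against the unconditioned distribution
sampled via σ (with τ ≈_j σ) is no worse than the worst comparison of two
fixed-entry distributions sampled via τ. -/
theorem hsDiv_approx_template_le_sup
    {W : Type*} [MeasurableSpace W] [LinearOrder W] {n : ℕ}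
    (μbar : Fin n → Measure W) (hμ : ∀ i, IsProbabilityMeasure (μbar i))
    (F : (Fin n → W) → ℝ) (hFmeas : Measurable F)
    (hFsym : ∀ (perm : Equiv.Perm (Fin n)) (x : Fin n → W), F (x ∘ perm) = F x)
    (hFmono : Monotone F)
    (hFsamp : FSamplable μbar F)
    (j : Fin n) (τ σ : Fin n → Fin n) (hτσ : ApproxAt j τ σ)
    (ε : ℝ) (hε : 0 ≤ ε) (v : W) :
    hsDiv ε (Measure.map (fun x => F (SAMP τ x)) (fixEntry μbar j v))
        (Measure.map (fun x => F (SAMP σ x)) (Measure.pi μbar))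
      ≤ ⨆ w : W, hsDiv ε (Measure.map (fun x => F (SAMP τ x)) (fixEntry μbar j v))
          (Measure.map (fun x => F (SAMP τ x)) (fixEntry μbar j w)) :=
  hsDiv_approx_template_le_sup_general μbar hμ F hFmeas hFmono hFsamp j τ σ hτσ ε hε v

end
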